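/- Let φ(x) = 2^{n/4} e^{−|x|²/2} on ℝⁿ and nonzero k ∈ ℤᵐ. Then the k-Fourier–Wigner transform of φ with itself satisfies V_k(φ,φ)(−q,−p) = e^{−|p|²/4} e^{−‖k‖₂²|q|²/4} for all q,p ∈ ℝⁿ. -/

import Mathlib

open Matrix MeasureTheory Complex Real

/-- For the Gaussian `φ(x) = 2^{n/4} e^{−|x|²/2}` and nonzero `k ∈ ℤᵐ`, the k-Fourier–Wigner
transform satisfies `V_k(φ,φ)(−q,−p) = e^{−|p|²/4} e^{−‖k‖₂²|q|²/4}`. -/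
theorem stmt_9 (n m : ℕ) (B : Fin m → Matrix (Fin n) (Fin n) ℝ)
    (horth : ∀ j, B j * (B j).transpose = 1)
    (hanti : ∀ j l, j ≠ l → (B j)⁻¹ * B l = -((B l)⁻¹ * B j))
    (k : Fin m → ℤ) (hk : k ≠ 0)
    (Bk : Matrix (Fin n) (Fin n) ℝ) (hBk : Bk = ∑ i, (k i : ℝ) • B i)
    (φ : (Fin n → ℝ) → ℂ)
    (hφ : φ = fun x : Fin n → ℝ => (((2 : ℝ) ^ ((n : ℝ) / 4) * Real.exp (-(∑ i, x i ^ 2) / 2) : ℝ) : ℂ))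
    (q p : Fin n → ℝ) :
    (2 * π : ℝ) ^ (-(n : ℝ) / 2) •
      ∫ x : Fin n → ℝ,
        Complex.exp (I * (((-q) ⬝ᵥ Bk.mulVec (x + (1 / 2 : ℝ) • (-p)) : ℝ) : ℂ)) *
          φ (x + (-p)) * (starRingEnd ℂ) (φ x)
      = ((Real.exp (-(∑ i, p i ^ 2) / 4) *
          Real.exp (-(∑ i, (k i : ℝ) ^ 2) * (∑ i, q i ^ 2) / 4) : ℝ) : ℂ) := by
  have hBt : ∀ i, (B i)⁻¹ = (B i)ᵀ := fun i => Matrix.inv_eq_right_inv (horth i)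
  set K : ℝ := ∑ i, (k i : ℝ) ^ 2 with hKdef
  -- cross terms anticommute
  have hcross : ∀ i j, i ≠ j → B i * (B j)ᵀ = -(B j * (B i)ᵀ) := by
    intro i j hij
    have h1 : (B i)ᵀ * B j = -((B j)ᵀ * B i) := by
      rw [← hBt, ← hBt]; exact hanti i j hij
    have h2 := congrArg (fun M => B j * M * (B j)ᵀ) h1
    simp only [Matrix.mul_neg, Matrix.neg_mul] at h2
    rw [show B j * ((B i)ᵀ * B j) * (B j)ᵀ = (B j * (B i)ᵀ) * (B j * (B j)ᵀ) by
        simp only [Matrix.mul_assoc],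
      show B j * ((B j)ᵀ * B i) * (B j)ᵀ = (B j * (B j)ᵀ) * (B i * (B j)ᵀ) by
        simp only [Matrix.mul_assoc],
      horth j, Matrix.mul_one, Matrix.one_mul] at h2
    rw [h2, neg_neg]
  -- Bk * Bkᵀ = K • 1
  have hBB : Bk * Bkᵀ = K • (1 : Matrix (Fin n) (Fin n) ℝ) := by
    have hf : ∀ i j : Fin m,
        (((k i : ℝ) * k j) • (B i * (B j)ᵀ)) + (((k j : ℝ) * k i) • (B j * (B i)ᵀ))
          = if i = j then ((2 : ℝ) * (k i : ℝ) ^ 2) • (1 : Matrix (Fin n) (Fin n) ℝ) else 0 := by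
      intro i j
      rcases eq_or_ne i j with rfl | hij
      · simp [horth i, two_mul, add_smul, sq]
      · simp only [if_neg hij, hcross i j hij, smul_neg, mul_comm ((k j : ℝ)) ((k i : ℝ))]
        exact neg_add_cancel _
    have hexpand : Bk * Bkᵀ = ∑ i, ∑ j, ((k i : ℝ) * k j) • (B i * (B j)ᵀ) := by
      rw [hBk, Matrix.transpose_sum]
      simp only [Matrix.transpose_smul]
      rw [Finset.sum_mul_sum]
      refine Finset.sum_congr rfl fun i _ => Finset.sum_congr rfl fun j _ => ?_
      rw [Matrix.smul_mul, Matrix.mul_smul, smul_smul]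
    have h2 : Bk * Bkᵀ + Bk * Bkᵀ = ((2 : ℝ) * K) • (1 : Matrix (Fin n) (Fin n) ℝ) := by
      nth_rewrite 2 [hexpand]
      rw [hexpand]
      nth_rewrite 2 [Finset.sum_comm]
      rw [← Finset.sum_add_distrib]
      simp_rw [← Finset.sum_add_distrib, hf]
      rw [hKdef, Finset.mul_sum, Finset.sum_smul]
      simp
    have : (2 : ℝ) • (Bk * Bkᵀ) = (2 : ℝ) • (K • (1 : Matrix (Fin n) (Fin n) ℝ)) := by
      rw [two_smul, h2, smul_smul]
    exact smul_right_injective _ two_ne_zero this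
  -- define b = Bkᵀ q
  set b : Fin n → ℝ := fun j => ∑ i, q i * Bk i j with hbdef
  have hsum : ∑ j, b j ^ 2 = K * ∑ i, q i ^ 2 := by
    have hb : b = Matrix.vecMul q Bk := by
      funext j; simp [hbdef, Matrix.vecMul, dotProduct]
    have : ∑ j, b j ^ 2 = dotProduct (Matrix.vecMul q Bk) (Bkᵀ.mulVec q) := by
      rw [Matrix.mulVec_transpose, hb, dotProduct]
      exact Finset.sum_congr rfl fun j _ => pow_two _
    rw [this, ← Matrix.dotProduct_mulVec, Matrix.mulVec_mulVec, hBB,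
      Matrix.smul_mulVec, Matrix.one_mulVec, dotProduct_smul,
      smul_eq_mul]
    congr 1
    exact Finset.sum_congr rfl fun i _ => (pow_two _).symm
  -- coordinate factors
  set c : Fin n → ℂ := fun j => (p j : ℂ) - I * (b j : ℝ) with hcdef
  set d : Fin n → ℂ := fun j => -((p j : ℂ)) ^ 2 / 2 + I * (b j : ℝ) * (p j : ℝ) / 2 with hddef
  set g : Fin n → ℝ → ℂ := fun j t => Complex.exp ((-1 : ℂ) * (t : ℂ) ^ 2 + c j * t + d j) with hgdef
  have hInt : ∀ x : Fin n → ℝ,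
      Complex.exp (I * (((-q) ⬝ᵥ Bk.mulVec (x + (1 / 2 : ℝ) • (-p)) : ℝ) : ℂ)) *
        φ (x + (-p)) * (starRingEnd ℂ) (φ x)
      = (((2 : ℝ) ^ ((n : ℝ) / 2) : ℝ) : ℂ) * ∏ j, g j (x j) := by
    intro x
    have hS : ((-q) ⬝ᵥ Bk.mulVec (x + (1 / 2 : ℝ) • (-p)) : ℝ)
        = ∑ j, (-(b j) * x j + b j * p j / 2) := by
      simp only [dotProduct, Matrix.mulVec, Pi.add_apply, Pi.smul_apply, Pi.neg_apply,
        smul_eq_mul, Finset.mul_sum]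
      rw [Finset.sum_comm]
      refine Finset.sum_congr rfl fun j _ => ?_
      rw [show -(b j) * x j + b j * p j / 2 = b j * (-(x j) + p j / 2) by ring, hbdef]
      simp only [Finset.sum_mul]
      exact Finset.sum_congr rfl fun i _ => by ring
    have hexp : I * ((∑ j, (-(b j) * x j + b j * p j / 2) : ℝ) : ℂ)
        + ((-(∑ i, (x i + -p i) ^ 2) / 2 : ℝ) : ℂ) + ((-(∑ i, x i ^ 2) / 2 : ℝ) : ℂ)
        = ∑ j, ((-1 : ℂ) * (x j : ℂ) ^ 2 + c j * (x j : ℂ) + d j) := by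
      push_cast
      rw [Finset.mul_sum, neg_div, neg_div, Finset.sum_div, Finset.sum_div,
        ← Finset.sum_neg_distrib, ← Finset.sum_neg_distrib,
        ← Finset.sum_add_distrib, ← Finset.sum_add_distrib]
      refine Finset.sum_congr rfl fun j _ => ?_
      rw [hcdef, hddef]
      push_cast
      ring
    rw [hφ]
    simp only [Pi.add_apply, Pi.neg_apply, Complex.conj_ofReal]
    simp only [Complex.ofReal_mul, Complex.ofReal_exp]
    rw [hS, hgdef]
    simp only
    rw [← Complex.exp_sum, ← hexp,
      show (((2 : ℝ) ^ ((n : ℝ) / 2) : ℝ) : ℂ)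
        = (((2:ℝ) ^ ((n:ℝ)/4) : ℝ) : ℂ) * (((2:ℝ) ^ ((n:ℝ)/4) : ℝ) : ℂ) from by
        rw [← Complex.ofReal_mul, ← Real.rpow_add two_pos]; ring_nf,
      Complex.exp_add, Complex.exp_add]
    ring
  -- each 1-d integral
  have hg1 : ∀ j, ∫ t : ℝ, g j t
      = (((π : ℝ) ^ (1/2 : ℝ) : ℝ) : ℂ)
        * Complex.exp (((-(p j ^ 2) / 4 - b j ^ 2 / 4 : ℝ)) : ℂ) := by
    intro j
    rw [hgdef]
    simp only
    rw [integral_cexp_quadratic (by norm_num : (-1 : ℂ).re < 0) (c j) (d j)]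
    congr 1
    · rw [neg_neg, div_one, show ((1 : ℂ)/2) = (((1:ℝ)/2 : ℝ) : ℂ) by norm_num,
        ← Complex.ofReal_cpow pi_pos.le]
    · congr 1
      rw [hcdef, hddef]
      push_cast
      linear_combination ((b j : ℂ) ^ 2 / 4) * Complex.I_sq
  -- assemble
  simp_rw [hInt]
  rw [MeasureTheory.integral_const_mul,
    MeasureTheory.integral_fintype_prod_volume_eq_prod (ι := Fin n) g]
  simp_rw [hg1, ← Complex.ofReal_exp]
  rw [Finset.prod_mul_distrib, Finset.prod_const, Finset.card_univ, Fintype.card_fin,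
    ← Complex.ofReal_prod, ← Real.exp_sum, ← Complex.ofReal_pow, ← Complex.ofReal_mul,
    Complex.real_smul, ← Complex.ofReal_mul, ← Complex.ofReal_mul, Complex.ofReal_inj]
  have hC : (2 * π : ℝ) ^ (-(n : ℝ) / 2) * ((2:ℝ) ^ ((n:ℝ)/2) * ((π : ℝ) ^ (1/2:ℝ)) ^ n) = 1 := by
    have h1 : ((π : ℝ) ^ (1/2 : ℝ)) ^ n = π ^ ((n : ℝ)/2) := by
      rw [← Real.rpow_natCast (π ^ (1/2:ℝ)) n, ← Real.rpow_mul pi_pos.le]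
      congr 1; push_cast; ring
    have h2 : (2 * π : ℝ) ^ (-(n : ℝ) / 2) = ((2:ℝ) ^ ((n:ℝ)/2) * π ^ ((n:ℝ)/2))⁻¹ := by
      rw [neg_div, Real.rpow_neg (by positivity), Real.mul_rpow two_pos.le pi_pos.le]
    rw [h1, h2, inv_mul_cancel₀ (by positivity)]
  have hR : (∑ j, (-(p j ^ 2) / 4 - b j ^ 2 / 4))
      = -(∑ i, p i ^ 2) / 4 + -K * (∑ i, q i ^ 2) / 4 := by
    have e1 : ∀ f : Fin n → ℝ, ∑ j, f j / 4 = (∑ j, f j) / 4 :=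
      fun f => (Finset.sum_div _ _ _).symm
    calc ∑ j, (-(p j ^ 2) / 4 - b j ^ 2 / 4)
        = (∑ j, -(p j ^ 2)) / 4 - (∑ j, b j ^ 2) / 4 := by
          rw [Finset.sum_sub_distrib, e1 (fun j => -(p j ^ 2)), e1 (fun j => b j ^ 2)]
      _ = -(∑ i, p i ^ 2) / 4 + -K * (∑ i, q i ^ 2) / 4 := by
          rw [hsum, Finset.sum_neg_distrib]; ring
  rw [hR, Real.exp_add]
  linear_combination
    (rexp (-(∑ i, p i ^ 2) / 4) * rexp (-K * (∑ i, q i ^ 2) / 4)) * hC
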